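/- arXiv:2111.12978 — 2 statements merged into one kernel-verified Lean document; each statement's English description precedes it below -/
import Mathlib

section
/- Intervention preserves recursive causal models: if ⟨F, A⟩ is a recursive causal model and [X⃗:=x⃗] is any assignment, then the intervened pair ⟨F′, A′⟩ is again a recursive causal model, i.e., A′ complies with F′ and F′ is recursive. -/
open Classical

/-- A finite signature: variables sorted into exogenous and endogenous, each with a
finite nonempty range of values. -/
structure Sig : Type 1 where
  Var : Type
  exo : Var → Prop
  Val : Var → Type
  [decEqVar : DecidableEq Var]
  [finVar : Fintype Var]
  [neVar : Nonempty Var]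
  [decEqVal : ∀ X : Var, DecidableEq (Val X)]
  [finVal : ∀ X : Var, Fintype (Val X)]
  [neVal : ∀ X : Var, Nonempty (Val X)]

attribute [instance] Sig.decEqVar Sig.finVar Sig.neVar Sig.decEqVal Sig.finVal Sig.neVal

variable {S : Sig}

/-- A valuation: a value for each variable. -/
abbrev Env (S : Sig) : Type := ∀ X : S.Var, S.Val X

instance : Nonempty (Env S) := ⟨fun X => Classical.arbitrary (S.Val X)⟩

/-- Values for all variables other than `V`. -/
abbrev Others (S : Sig) (V : S.Var) : Type := ∀ X : {X : S.Var // X ≠ V}, S.Val X.val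

/-- The restriction of a valuation to the variables other than `V`. -/
def Env.restrict (A : Env S) (V : S.Var) : Others S V := fun X => A X.val

/-- A family of structural functions (only the components at endogenous variables
are meaningful). -/
abbrev StructFuns (S : Sig) : Type := ∀ V : S.Var, Others S V → S.Val V

/-- A valuation complies with the structural functions: the value of each endogenous
variable is obtained by applying its structural function to the values of all
other variables. -/
def Complies (F : StructFuns S) (A : Env S) : Prop :=
  ∀ V : S.Var, ¬ S.exo V → A V = F V (A.restrict V)

/-- The endogenous variable `V` is directly causally affected by `X` under `F`. -/
def DirAff (F : StructFuns S) (X V : S.Var) : Prop :=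
  ¬ S.exo V ∧ ∃ (h : X ≠ V) (g : Others S V) (x₁ x₂ : S.Val X),
    x₁ ≠ x₂ ∧
      F V (Function.update g ⟨X, h⟩ x₁) ≠ F V (Function.update g ⟨X, h⟩ x₂)

/-- `F` is recursive: the transitive closure of the direct causal dependence
relation is asymmetric (transitivity is automatic for `Relation.TransGen`). -/
def RecursiveF (F : StructFuns S) : Prop :=
  ∀ a b : S.Var, Relation.TransGen (DirAff F) a b → ¬ Relation.TransGen (DirAff F) b a

/-- An assignment of values to a set of pairwise distinct variables. -/
abbrev Intervention (S : Sig) : Type := ∀ X : S.Var, Option (S.Val X)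

/-- The empty assignment. -/
def iEmpty (S : Sig) : Intervention S := fun _ => none

/-- Extend an assignment by additionally setting `Y` to `y` (overriding). -/
def iUpd (I : Intervention S) (Y : S.Var) (y : S.Val Y) : Intervention S :=
  Function.update I Y (some y)

/-- Combine assignments, the second overriding the first:  `[X⃗ := x⃗, Y⃗ := y⃗]`. -/
def icomp (I J : Intervention S) : Intervention S := fun W =>
  match J W with
  | some v => some v
  | none => I W

/-- The intervened family of structural functions: intervened variables get the
constant function returning the assigned value; the rest are unchanged. -/
def intF (F : StructFuns S) (I : Intervention S) : StructFuns S :=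
  fun V g => (I V).getD (F V g)

/-- `A'` is the result of intervening with `I` on the valuation `A` (w.r.t. `F`):
exogenous intervened variables get the assigned value, exogenous non-intervened
variables keep their value, and each endogenous variable complies with its new
structural function. -/
def IntervenedVal (F : StructFuns S) (A : Env S) (I : Intervention S) (A' : Env S) : Prop :=
  (∀ X : S.Var, S.exo X → ∀ v : S.Val X, I X = some v → A' X = v) ∧
  (∀ X : S.Var, S.exo X → I X = none → A' X = A X) ∧
  (∀ V : S.Var, ¬ S.exo V → A' V = intF F I V (A'.restrict V))

/-- The intervened valuation (unique when `F` is recursive). -/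
noncomputable def intVal (F : StructFuns S) (A : Env S) (I : Intervention S) : Env S :=
  Classical.epsilon (IntervenedVal F A I)


/-! Deleting the structural functions of intervened variables can only remove direct causal
dependences, so recursiveness survives the intervention. A recursive `F` on finitely many
variables has a well-founded direct-dependence relation, and well-founded recursion along it
produces, for any prescribed values of the exogenous variables, a valuation complying with `F`.
Applied to the intervened functions, with the exogenous values prescribed by the intervention,
this shows that the valuation chosen by `intVal` exists and hence complies. -/

section

variable {F : StructFuns S}

lemma DirAff.of_intF {I : Intervention S} {X V : S.Var} (h : DirAff (intF F I) X V) :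
    DirAff F X V := by
  obtain ⟨hV, hXV, g, x₁, x₂, hx, hF⟩ := h
  refine ⟨hV, hXV, g, x₁, x₂, hx, ?_⟩
  cases hI : I V with
  | some v => simp [intF, hI] at hF
  | none => simpa [intF, hI] using hF

lemma RecursiveF.intF (hF : RecursiveF F) (I : Intervention S) : RecursiveF (intF F I) :=
  fun a b hab hba => hF a b (Relation.TransGen.mono (fun _ _ => DirAff.of_intF) _ _ hab)
    (Relation.TransGen.mono (fun _ _ => DirAff.of_intF) _ _ hba)

lemma RecursiveF.wellFounded (hF : RecursiveF F) : WellFounded (DirAff F) :=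
  have : Std.Irrefl (Relation.TransGen (DirAff F)) := ⟨fun a h => hF a a h h⟩
  Subrelation.wf Relation.TransGen.single (Finite.wellFounded_of_trans_of_irrefl _)

lemma apply_update_eq_of_not_dirAff {V : S.Var} (hV : ¬ S.exo V) {Y : {X : S.Var // X ≠ V}}
    (hY : ¬ DirAff F Y V) (g : Others S V) (y : S.Val Y) :
    F V (Function.update g Y y) = F V g := by
  by_contra hne
  refine hY ⟨hV, Y.2, g, y, g Y, fun hy => hne (by rw [hy, Function.update_eq_self]), ?_⟩
  rwa [Function.update_eq_self]

lemma apply_eq_of_eqOn_dirAff {V : S.Var} (hV : ¬ S.exo V) {g g' : Others S V}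
    (hgg' : ∀ Y : {X : S.Var // X ≠ V}, DirAff F Y V → g Y = g' Y) : F V g = F V g' := by
  suffices key : ∀ s : Finset {X : S.Var // X ≠ V}, ∀ g : Others S V,
      (∀ Y ∉ s, g Y = g' Y) → (∀ Y : {X : S.Var // X ≠ V}, DirAff F Y V → g Y = g' Y) →
      F V g = F V g' from
    key Finset.univ g (by simp) hgg'
  intro s
  induction s using Finset.induction_on with
  | empty => exact fun g hoff _ => congrArg _ (funext fun Y => hoff Y (Finset.notMem_empty Y))
  | insert Y s _ ih =>
    intro g hoff hdir
    have hupdate : F V (Function.update g Y (g' Y)) = F V g := by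
      by_cases hY : DirAff F Y V
      · rw [← hdir Y hY, Function.update_eq_self]
      · exact apply_update_eq_of_not_dirAff hV hY g _
    have hagree (Z) (hZ : g Z = g' Z) : Function.update g Y (g' Y) Z = g' Z := by
      rcases eq_or_ne Z Y with rfl | hZY <;> simp [*]
    rw [← hupdate]
    refine ih _ (fun Z hZ => ?_) (fun Z hZ => hagree Z (hdir Z hZ))
    rcases eq_or_ne Z Y with rfl | hZY
    · simp
    · exact hagree Z (hoff Z (by simp [hZY, hZ]))

/-- The existence half of the unique-solution property of recursive models. -/
lemma RecursiveF.exists_complies (hF : RecursiveF F) (B : Env S) :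
    ∃ A : Env S, (∀ X, S.exo X → A X = B X) ∧ Complies F A := by
  let step (V : S.Var) (rec : ∀ W, DirAff F W V → S.Val W) : S.Val V :=
    if S.exo V then B V
    else F V fun Y => if h : DirAff F Y V then rec Y h else B Y
  let A : Env S := hF.wellFounded.fix step
  have hA (V : S.Var) : A V = step V fun W _ => A W := hF.wellFounded.fix_eq step V
  refine ⟨A, fun X hX => by simp [hA X, step, hX], fun V hV => ?_⟩
  rw [hA V]
  simp only [step, if_neg hV]
  exact apply_eq_of_eqOn_dirAff hV fun Y hY => by simp [hY, Env.restrict]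

end

lemma exists_intervenedVal {F : StructFuns S} (hF : RecursiveF F) (A : Env S)
    (I : Intervention S) : ∃ A' : Env S, IntervenedVal F A I A' := by
  obtain ⟨A', hexo, hcomp⟩ := (hF.intF I).exists_complies fun X => (I X).getD (A X)
  exact ⟨A', fun X hX v hI => by simp [hexo X hX, hI],
    fun X hX hI => by simp [hexo X hX, hI], hcomp⟩

theorem intervention_preserves_recursive_causal_models_general
    (S : Sig) (F : StructFuns S) (A : Env S) (I : Intervention S)
    (hRec : RecursiveF F) :
    Complies (intF F I) (intVal F A I) ∧ RecursiveF (intF F I) :=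
  ⟨(Classical.epsilon_spec (exists_intervenedVal hRec A I)).2.2, hRec.intF I⟩

/-- Theorem: intervention preserves recursive causal models.  If `⟨F, A⟩` is a
recursive causal model and `I` is any assignment, then the intervened pair
`⟨intF F I, intVal F A I⟩` is again a recursive causal model: the intervened
valuation complies with the intervened structural functions, and the intervened
structural functions are recursive. -/
theorem intervention_preserves_recursive_causal_models
    (S : Sig) (F : StructFuns S) (A : Env S) (I : Intervention S)
    (hComp : Complies F A) (hRec : RecursiveF F) :
    Complies (intF F I) (intVal F A I) ∧ RecursiveF (intF F I) :=
  intervention_preserves_recursive_causal_models_general S F A I hRec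
end

section
/- Syntactic characterization of direct causal effect: for every recursive causal model ⟨F, A⟩, every variable X and every endogenous variable V with X ≠ V, the formula X ⇝ V holds in ⟨F, A⟩ if and only if V is directly causally affected by X under F. -/
open Classical

variable {S : Sig}

/-- The language L_C: atoms `Y = y`, negation, conjunction, interventionist
counterfactual operators. -/
inductive Form (S : Sig) : Type where
  | eq (Y : S.Var) (y : S.Val Y) : Form S
  | neg (φ : Form S) : Form S
  | conj (φ ψ : Form S) : Form S
  | int (I : Intervention S) (φ : Form S) : Form S

namespace Form

/-- Material implication, defined from `¬` and `∧` as usual. -/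
def impl (φ ψ : Form S) : Form S := Form.neg (Form.conj φ (Form.neg ψ))

/-- Disjunction, defined from `¬` and `∧` as usual. -/
def orF (φ ψ : Form S) : Form S := Form.neg (Form.conj (Form.neg φ) (Form.neg ψ))

/-- Biconditional. -/
def iffF (φ ψ : Form S) : Form S := Form.conj (impl φ ψ) (impl ψ φ)

end Form

/-- A canonical contradiction. -/
noncomputable def botF (S : Sig) : Form S :=
  let X : S.Var := Classical.arbitrary S.Var
  let x : S.Val X := Classical.arbitrary (S.Val X)
  Form.conj (Form.eq X x) (Form.neg (Form.eq X x))

/-- A canonical tautology. -/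
noncomputable def topF (S : Sig) : Form S := Form.neg (botF S)

/-- Disjunction of a list of formulas (the empty disjunction is a contradiction). -/
noncomputable def bigOr : List (Form S) → Form S
  | [] => botF S
  | φ :: l => l.foldl Form.orF φ

/-- Conjunction of a list of formulas (the empty conjunction is a tautology). -/
noncomputable def bigConj : List (Form S) → Form S
  | [] => topF S
  | φ :: l => l.foldl Form.conj φ

/-- `φ` is an instance of a propositional tautology: it evaluates to `true` under
every Boolean valuation that respects negation and conjunction (treating all
other formulas as atoms). -/
def Tauto (φ : Form S) : Prop :=
  ∀ v : Form S → Bool,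
    (∀ ψ : Form S, v (Form.neg ψ) = !(v ψ)) →
    (∀ ψ χ : Form S, v (Form.conj ψ χ) = (v ψ && v χ)) →
    v φ = true

/-- The assignment `[Z⃗ := z⃗, X := x]` where `Z⃗` lists all variables other than
`X` and `V`, used in the formula `X ⇝ V`. -/
def ltInt (X V : S.Var) (g : ∀ W : {W : S.Var // W ≠ X ∧ W ≠ V}, S.Val W.val)
    (x : S.Val X) : Intervention S := fun W =>
  if h : W = X then some (h.symm ▸ x)
  else if h' : W = V then none
  else some (g ⟨W, ⟨h, h'⟩⟩)

/-- The formula `X ⇝ V`: the disjunction, over tuples `z⃗` of values for all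
variables other than `X` and `V`, distinct values `x₁ ≠ x₂` of `X` and distinct
values `v₁ ≠ v₂` of `V`, of `[Z⃗:=z⃗, X:=x₁]V=v₁ ∧ [Z⃗:=z⃗, X:=x₂]V=v₂`. -/
noncomputable def leadsTo (X V : S.Var) : Form S :=
  bigOr ((Finset.univ.filter
      (fun p : (∀ W : {W : S.Var // W ≠ X ∧ W ≠ V}, S.Val W.val) ×
          (S.Val X × S.Val X) × (S.Val V × S.Val V) =>
        p.2.1.1 ≠ p.2.1.2 ∧ p.2.2.1 ≠ p.2.2.2)).toList.map
    (fun p =>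
      Form.conj
        (Form.int (ltInt X V p.1 p.2.1.1) (Form.eq V p.2.2.1))
        (Form.int (ltInt X V p.1 p.2.1.2) (Form.eq V p.2.2.2))))

/-- The chain `X₀ ⇝ X₁ ∧ ⋯ ∧ X_k ⇝ X_{k+1}`. -/
noncomputable def chainConj (X : ℕ → S.Var) : ℕ → Form S
  | 0 => leadsTo (X 0) (X 1)
  | n + 1 => Form.conj (chainConj X n) (leadsTo (X (n + 1)) (X (n + 2)))

/-- `ψ₁ → (ψ₂ → ⋯ → (ψₙ → φ))` for a list of premises. -/
def impsFrom : List (Form S) → Form S → Form S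
  | [], φ => φ
  | ψ :: l, φ => Form.impl ψ (impsFrom l φ)

/-- Satisfaction of an L_C formula in a causal model `⟨F, A⟩`. -/
def SatC : Form S → StructFuns S → Env S → Prop
  | Form.eq Y y, _, A => A Y = y
  | Form.neg φ, F, A => ¬ SatC φ F A
  | Form.conj φ ψ, F, A => SatC φ F A ∧ SatC ψ F A
  | Form.int I φ, F, A => SatC φ (intF F I) (intVal F A I)

section Aux

/-- The `Others S V` valuation determined by `g` and `x`. -/
def chooseOthers (X V : S.Var) (g : ∀ W : {W : S.Var // W ≠ X ∧ W ≠ V}, S.Val W.val)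
    (x : S.Val X) : Others S V := fun W =>
  if h : W.val = X then h.symm ▸ x else g ⟨W.val, ⟨h, W.prop⟩⟩

lemma ltInt_eq_some (X V : S.Var)
    (g : ∀ W : {W : S.Var // W ≠ X ∧ W ≠ V}, S.Val W.val) (x : S.Val X)
    (W : S.Var) (hW : W ≠ V) :
    ltInt X V g x W = some (chooseOthers X V g x ⟨W, hW⟩) := by
  by_cases h : W = X
  · subst h; simp [ltInt, chooseOthers]
  · simp [ltInt, chooseOthers, h, hW]

lemma ltInt_self (X V : S.Var) (hXV : X ≠ V)
    (g : ∀ W : {W : S.Var // W ≠ X ∧ W ≠ V}, S.Val W.val) (x : S.Val X) :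
    ltInt X V g x V = none := by
  simp [ltInt, Ne.symm hXV]

/-- The (unique) valuation resulting from the intervention `ltInt X V g x`. -/
noncomputable def theEnv (F : StructFuns S) (X V : S.Var)
    (g : ∀ W : {W : S.Var // W ≠ X ∧ W ≠ V}, S.Val W.val) (x : S.Val X) : Env S :=
  fun W => if h : W = V then h.symm ▸ F V (chooseOthers X V g x)
           else chooseOthers X V g x ⟨W, h⟩

lemma theEnv_restrict (F : StructFuns S) (X V : S.Var)
    (g : ∀ W : {W : S.Var // W ≠ X ∧ W ≠ V}, S.Val W.val) (x : S.Val X) :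
    (theEnv F X V g x).restrict V = chooseOthers X V g x := by
  funext W
  rcases W with ⟨W, hW⟩
  simp [Env.restrict, theEnv, hW]

lemma theEnv_intervened (F : StructFuns S) (A : Env S) (X V : S.Var)
    (hV : ¬ S.exo V) (hXV : X ≠ V)
    (g : ∀ W : {W : S.Var // W ≠ X ∧ W ≠ V}, S.Val W.val) (x : S.Val X) :
    IntervenedVal F A (ltInt X V g x) (theEnv F X V g x) := by
  refine ⟨?_, ?_, ?_⟩
  · intro W _ v hsome
    by_cases h : W = V
    · subst h; rw [ltInt_self _ _ hXV] at hsome; exact absurd hsome (by simp)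
    · rw [ltInt_eq_some X V g x W h] at hsome
      simp only [Option.some.injEq] at hsome
      simp [theEnv, h, ← hsome]
  · intro W hexo hnone
    by_cases h : W = V
    · exact absurd hexo (h ▸ hV)
    · rw [ltInt_eq_some X V g x W h] at hnone; exact absurd hnone (by simp)
  · intro W hendo
    by_cases h : W = V
    · subst h
      simp [theEnv, intF, ltInt_self _ _ hXV, theEnv_restrict]
    · simp [theEnv, h, intF, ltInt_eq_some X V g x W h]

lemma intervened_val_at (F : StructFuns S) (A : Env S) (X V : S.Var)
    (hV : ¬ S.exo V) (hXV : X ≠ V)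
    (g : ∀ W : {W : S.Var // W ≠ X ∧ W ≠ V}, S.Val W.val) (x : S.Val X)
    (A' : Env S) (hA' : IntervenedVal F A (ltInt X V g x) A') :
    A' V = F V (chooseOthers X V g x) := by
  obtain ⟨h1, h2, h3⟩ := hA'
  have hres : A'.restrict V = chooseOthers X V g x := by
    funext W
    rcases W with ⟨W, hW⟩
    show A' W = chooseOthers X V g x ⟨W, hW⟩
    by_cases hexo : S.exo W
    · exact h1 W hexo _ (ltInt_eq_some X V g x W hW)
    · rw [h3 W hexo]
      simp [intF, ltInt_eq_some X V g x W hW]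
  rw [h3 V hV, hres]
  simp [intF, ltInt_self X V hXV]

lemma intVal_at (F : StructFuns S) (A : Env S) (X V : S.Var)
    (hV : ¬ S.exo V) (hXV : X ≠ V)
    (g : ∀ W : {W : S.Var // W ≠ X ∧ W ≠ V}, S.Val W.val) (x : S.Val X) :
    intVal F A (ltInt X V g x) V = F V (chooseOthers X V g x) := by
  have hspec : IntervenedVal F A (ltInt X V g x) (intVal F A (ltInt X V g x)) :=
    Classical.epsilon_spec ⟨theEnv F X V g x, theEnv_intervened F A X V hV hXV g x⟩
  exact intervened_val_at F A X V hV hXV g x _ hspec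

lemma satC_orF {φ ψ : Form S} {F : StructFuns S} {A : Env S} :
    SatC (Form.orF φ ψ) F A ↔ SatC φ F A ∨ SatC ψ F A := by
  simp only [Form.orF, SatC]; tauto

lemma satC_foldl_orF (l : List (Form S)) (φ : Form S) (F : StructFuns S) (A : Env S) :
    SatC (l.foldl Form.orF φ) F A ↔ SatC φ F A ∨ ∃ ψ ∈ l, SatC ψ F A := by
  induction l generalizing φ with
  | nil => simp
  | cons χ l ih =>
    simp only [List.foldl_cons, ih, satC_orF, List.mem_cons]
    constructor
    · rintro ((h | h) | ⟨ψ, hψ, h⟩)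
      · exact Or.inl h
      · exact Or.inr ⟨χ, Or.inl rfl, h⟩
      · exact Or.inr ⟨ψ, Or.inr hψ, h⟩
    · rintro (h | ⟨ψ, (rfl | hψ), h⟩)
      · exact Or.inl (Or.inl h)
      · exact Or.inl (Or.inr h)
      · exact Or.inr ⟨ψ, hψ, h⟩

lemma satC_bigOr (l : List (Form S)) (F : StructFuns S) (A : Env S) :
    SatC (bigOr l) F A ↔ ∃ ψ ∈ l, SatC ψ F A := by
  cases l with
  | nil => simp [bigOr, botF, SatC]
  | cons φ l =>
    simp only [bigOr, satC_foldl_orF, List.mem_cons]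
    constructor
    · rintro (h | ⟨ψ, hψ, h⟩)
      · exact ⟨φ, Or.inl rfl, h⟩
      · exact ⟨ψ, Or.inr hψ, h⟩
    · rintro ⟨ψ, (rfl | hψ), h⟩
      · exact Or.inl h
      · exact Or.inr ⟨ψ, hψ, h⟩

lemma update_chooseOthers (X V : S.Var) (hXV : X ≠ V)
    (g : ∀ W : {W : S.Var // W ≠ X ∧ W ≠ V}, S.Val W.val) (x₀ x : S.Val X) :
    Function.update (chooseOthers X V g x₀) ⟨X, hXV⟩ x = chooseOthers X V g x := by
  funext W
  rcases W with ⟨W, hW⟩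
  by_cases h : W = X
  · subst h
    have hu : Function.update (chooseOthers W V g x₀) ⟨W, hXV⟩ x ⟨W, hW⟩ = x :=
      Function.update_self _ _ _
    rw [hu]
    simp [chooseOthers]
  · rw [Function.update_of_ne (by simp [Subtype.ext_iff, h])]
    simp [chooseOthers, h]

lemma chooseOthers_eq_update (X V : S.Var) (hXV : X ≠ V)
    (g' : Others S V) (x : S.Val X) :
    chooseOthers X V (fun W => g' ⟨W.val, W.prop.2⟩) x = Function.update g' ⟨X, hXV⟩ x := by
  funext W
  rcases W with ⟨W, hW⟩
  by_cases h : W = X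
  · subst h
    have hu : Function.update g' ⟨W, hXV⟩ x ⟨W, hW⟩ = x :=
      Function.update_self _ _ _
    rw [hu]
    simp [chooseOthers]
  · rw [Function.update_of_ne (by simp [Subtype.ext_iff, h])]
    simp [chooseOthers, h]

end Aux

/-- Theorem: syntactic characterization of direct causal effect.  In any recursive
causal model `⟨F, A⟩`, for any variable `X` and endogenous variable `V` with
`X ≠ V`, the formula `X ⇝ V` holds iff `V` is directly causally affected by `X`
under `F`. -/
theorem leadsTo_characterizes_direct_effect
    (S : Sig) (F : StructFuns S) (A : Env S)
    (hRec : RecursiveF F) (hComp : Complies F A)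
    (X V : S.Var) (hV : ¬ S.exo V) (hXV : X ≠ V) :
    SatC (leadsTo X V) F A ↔ DirAff F X V := by
  have hkey : SatC (leadsTo X V) F A ↔
      ∃ (g : ∀ W : {W : S.Var // W ≠ X ∧ W ≠ V}, S.Val W.val) (x₁ x₂ : S.Val X)
        (v₁ v₂ : S.Val V), (x₁ ≠ x₂ ∧ v₁ ≠ v₂) ∧
          F V (chooseOthers X V g x₁) = v₁ ∧ F V (chooseOthers X V g x₂) = v₂ := by
    rw [leadsTo, satC_bigOr]
    constructor
    · rintro ⟨ψ, hmem, hψ⟩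
      simp only [List.mem_map, Finset.mem_toList, Finset.mem_filter, Finset.mem_univ,
        true_and] at hmem
      obtain ⟨p, hp, rfl⟩ := hmem
      have h1 : intVal F A (ltInt X V p.1 p.2.1.1) V = p.2.2.1 := hψ.1
      have h2 : intVal F A (ltInt X V p.1 p.2.1.2) V = p.2.2.2 := hψ.2
      refine ⟨p.1, p.2.1.1, p.2.1.2, p.2.2.1, p.2.2.2, hp, ?_, ?_⟩
      · rw [← h1, intVal_at F A X V hV hXV]
      · rw [← h2, intVal_at F A X V hV hXV]
    · rintro ⟨g, x₁, x₂, v₁, v₂, hne, e1, e2⟩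
      refine ⟨Form.conj
        (Form.int (ltInt X V g x₁) (Form.eq V v₁))
        (Form.int (ltInt X V g x₂) (Form.eq V v₂)), ?_, ?_, ?_⟩
      · simp only [List.mem_map, Finset.mem_toList, Finset.mem_filter, Finset.mem_univ,
          true_and]
        exact ⟨⟨g, ⟨x₁, x₂⟩, ⟨v₁, v₂⟩⟩, hne, rfl⟩
      · show intVal F A (ltInt X V g x₁) V = v₁
        rw [intVal_at F A X V hV hXV g x₁]; exact e1
      · show intVal F A (ltInt X V g x₂) V = v₂
        rw [intVal_at F A X V hV hXV g x₂]; exact e2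
  rw [hkey]
  constructor
  · rintro ⟨g, x₁, x₂, v₁, v₂, ⟨hx, hv⟩, e1, e2⟩
    refine ⟨hV, hXV, chooseOthers X V g x₁, x₁, x₂, hx, ?_⟩
    rw [update_chooseOthers X V hXV g x₁ x₁, update_chooseOthers X V hXV g x₁ x₂,
      e1, e2]
    exact hv
  · rintro ⟨_, h, g', x₁, x₂, hx, hne⟩
    refine ⟨fun W => g' ⟨W.val, W.prop.2⟩, x₁, x₂,
      F V (chooseOthers X V (fun W => g' ⟨W.val, W.prop.2⟩) x₁),
      F V (chooseOthers X V (fun W => g' ⟨W.val, W.prop.2⟩) x₂), ⟨hx, ?_⟩, rfl, rfl⟩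
    rw [chooseOthers_eq_update X V hXV g' x₁, chooseOthers_eq_update X V hXV g' x₂]
    exact hne
end
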